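/- arXiv:2211.00506 — 3 statements merged into one kernel-verified Lean document; each statement's English description precedes it below -/
import Mathlib

section
/- Let P be a complex polynomial of degree m+n+1 whose derivative is P'(z) = (z-b)^m (z-a)^n with a ≠ b and m, n ≥ 1. Then P(a) ≠ P(b). -/
open Polynomial

theorem eval_ne_of_derivative_eq (P : Polynomial ℂ) (a b : ℂ) (m n : ℕ)
    (hab : a ≠ b) (hm : 1 ≤ m) (hn : 1 ≤ n)
    (hdeg : P.natDegree = m + n + 1)
    (hder : Polynomial.derivative P = (X - C b) ^ m * (X - C a) ^ n) :
    P.eval a ≠ P.eval b := by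
  intro heq
  set Q : Polynomial ℂ := P - C (P.eval a) with hQ
  have hd' : derivative Q = (X - C b) ^ m * (X - C a) ^ n := by
    simp [hQ, hder]
  have hder_ne : ((X - C b) ^ m * (X - C a) ^ n : Polynomial ℂ) ≠ 0 :=
    mul_ne_zero (pow_ne_zero _ (X_sub_C_ne_zero b)) (pow_ne_zero _ (X_sub_C_ne_zero a))
  have hQ0 : Q ≠ 0 := by
    intro h
    rw [h, derivative_zero] at hd'
    exact hder_ne hd'.symm
  have hQa : Q.IsRoot a := by simp [hQ, IsRoot]
  have hQb : Q.IsRoot b := by simp [hQ, IsRoot, heq]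
  have hma : Q.rootMultiplicity a = n + 1 := by
    have h1 := derivative_rootMultiplicity_of_root hQa
    rw [hd', rootMultiplicity_mul hder_ne, rootMultiplicity_X_sub_C_pow a n,
      rootMultiplicity_eq_zero (by simp only [IsRoot, eval_pow, eval_sub, eval_X, eval_C]; exact pow_ne_zero _ (sub_ne_zero_of_ne hab)), zero_add] at h1
    have hpos : 1 ≤ Q.rootMultiplicity a := (le_rootMultiplicity_iff hQ0).2 (by
      simpa using dvd_iff_isRoot.2 hQa)
    omega
  have hmb : Q.rootMultiplicity b = m + 1 := by
    have h1 := derivative_rootMultiplicity_of_root hQb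
    rw [hd', rootMultiplicity_mul hder_ne, rootMultiplicity_X_sub_C_pow b m,
      rootMultiplicity_eq_zero (by simp only [IsRoot, eval_pow, eval_sub, eval_X, eval_C]; exact pow_ne_zero _ (sub_ne_zero_of_ne (Ne.symm hab))), add_zero] at h1
    have hpos : 1 ≤ Q.rootMultiplicity b := (le_rootMultiplicity_iff hQ0).2 (by
      simpa using dvd_iff_isRoot.2 hQb)
    omega
  have hdvda : (X - C a) ^ (n + 1) ∣ Q := hma ▸ Q.pow_rootMultiplicity_dvd a
  have hdvdb : (X - C b) ^ (m + 1) ∣ Q := hmb ▸ Q.pow_rootMultiplicity_dvd b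
  have hcop : IsCoprime ((X - C a) ^ (n + 1)) ((X - C b) ^ (m + 1) : Polynomial ℂ) :=
    (isCoprime_X_sub_C_of_isUnit_sub (by
      exact (sub_ne_zero_of_ne hab).isUnit)).pow
  have hdvd : (X - C a) ^ (n + 1) * (X - C b) ^ (m + 1) ∣ Q := hcop.mul_dvd hdvda hdvdb
  have hle := natDegree_le_of_dvd hdvd hQ0
  rw [natDegree_mul (pow_ne_zero _ (X_sub_C_ne_zero a)) (pow_ne_zero _ (X_sub_C_ne_zero b))] at hle
  simp only [natDegree_pow, natDegree_X_sub_C, mul_one] at hle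
  have hQdeg : Q.natDegree = m + n + 1 := by
    rw [hQ, natDegree_sub_C, hdeg]
  omega
end

section
/- Let P be a complex polynomial of degree m+n+1 with P'(z) = (m+n+1)(z-d₁)^m (z-d₂)^n, d₁ ≠ d₂, and suppose P(d₁) = P(d₂). Then P - P(d₁) is divisible by (z-d₁)^{m+1} (z-d₂)^{n+1}, hence P - P(d₁) = 0 is forced to have degree ≥ m+n+2, a contradiction; conclude that no polynomial of degree m+n+1 can have P'(z) = (m+n+1)(z-d₁)^m(z-d₂)^n with d₁ ≠ d₂, m,n ≥ 1, and P(d₁) = P(d₂). -/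
open Polynomial

theorem no_poly_with_equal_critical_values (d₁ d₂ : ℂ) (m n : ℕ)
    (hd : d₁ ≠ d₂) (hm : 1 ≤ m) (hn : 1 ≤ n) :
    ¬ ∃ P : Polynomial ℂ, P.natDegree = m + n + 1 ∧
      Polynomial.derivative P = C ((m + n + 1 : ℕ) : ℂ) * (X - C d₁) ^ m * (X - C d₂) ^ n ∧
      P.eval d₁ = P.eval d₂ := by
  rintro ⟨P, hdeg, hder, heq⟩
  set Q := P - C (P.eval d₁) with hQ
  have hQd₁ : Q.IsRoot d₁ := by simp [hQ, IsRoot]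
  have hQd₂ : Q.IsRoot d₂ := by simp [hQ, IsRoot, heq]
  have hQder : derivative Q = C ((m + n + 1 : ℕ) : ℂ) * (X - C d₁) ^ m * (X - C d₂) ^ n := by
    simp [hQ, hder]
  have hc : (((m + n + 1 : ℕ) : ℂ)) ≠ 0 := by exact Nat.cast_ne_zero.mpr (by omega)
  have hder0 : derivative Q ≠ 0 := by
    rw [hQder]
    exact mul_ne_zero (mul_ne_zero (C_ne_zero.mpr hc) (pow_ne_zero _ (X_sub_C_ne_zero d₁)))
      (pow_ne_zero _ (X_sub_C_ne_zero d₂))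
  have hQ0 : Q ≠ 0 := by
    intro h; rw [h] at hder0; simp at hder0
  have hQdeg : Q.natDegree = m + n + 1 := by rw [hQ, natDegree_sub_C, hdeg]
  -- root multiplicities of derivative
  have hrm : ∀ (a b : ℂ) (k l : ℕ), a ≠ b →
      rootMultiplicity a ((C ((m + n + 1 : ℕ) : ℂ) * (X - C a) ^ k * (X - C b) ^ l : ℂ[X])) = k := by
    intro a b k l hab
    rw [rootMultiplicity_mul (by
        exact mul_ne_zero (mul_ne_zero (C_ne_zero.mpr hc) (pow_ne_zero _ (X_sub_C_ne_zero a)))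
          (pow_ne_zero _ (X_sub_C_ne_zero b))),
      rootMultiplicity_mul (by
        exact mul_ne_zero (C_ne_zero.mpr hc) (pow_ne_zero _ (X_sub_C_ne_zero a))),
      rootMultiplicity_X_sub_C_pow]
    rw [rootMultiplicity_eq_zero (by simp only [IsRoot, eval_C]; exact_mod_cast hc), rootMultiplicity_eq_zero (by
      simp [IsRoot, sub_eq_zero, hab])]
    ring
  have h1 : rootMultiplicity d₁ Q = m + 1 := by
    have := derivative_rootMultiplicity_of_root hQd₁
    rw [hQder, hrm d₁ d₂ m n hd] at this
    have hpos : 1 ≤ rootMultiplicity d₁ Q :=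
      (rootMultiplicity_pos hQ0).mpr hQd₁
    omega
  have h2 : rootMultiplicity d₂ Q = n + 1 := by
    have := derivative_rootMultiplicity_of_root hQd₂
    have hQder' : derivative Q = C ((m + n + 1 : ℕ) : ℂ) * (X - C d₂) ^ n * (X - C d₁) ^ m := by
      rw [hQder]; ring
    rw [hQder', hrm d₂ d₁ n m hd.symm] at this
    have hpos : 1 ≤ rootMultiplicity d₂ Q :=
      (rootMultiplicity_pos hQ0).mpr hQd₂
    omega
  have hdvd1 : (X - C d₁) ^ (m + 1) ∣ Q := by
    rw [← h1]; exact pow_rootMultiplicity_dvd Q d₁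
  have hdvd2 : (X - C d₂) ^ (n + 1) ∣ Q := by
    rw [← h2]; exact pow_rootMultiplicity_dvd Q d₂
  have hcop : IsCoprime ((X - C d₁) ^ (m + 1)) ((X - C d₂) ^ (n + 1)) :=
    (isCoprime_X_sub_C_of_isUnit_sub (sub_ne_zero.mpr hd).isUnit).pow
  have hdvd := hcop.mul_dvd hdvd1 hdvd2
  have := natDegree_le_of_dvd hdvd hQ0
  rw [natDegree_mul (pow_ne_zero _ (X_sub_C_ne_zero d₁)) (pow_ne_zero _ (X_sub_C_ne_zero d₂)),
    natDegree_pow, natDegree_pow, natDegree_X_sub_C, natDegree_X_sub_C, hQdeg] at this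
  omega
end

section
/- Let Q be a complex polynomial of degree m+n+1 with Q'(z) = (z-b)^m (z-a)^n, a ≠ b, m, n ≥ 1. Then Q(a) ≠ Q(b), so the set {0, -Q(a), -Q(b), -(Q(a)+Q(b))/2} excludes at most 4 complex numbers, and in particular there exists c ∈ ℂ with c ∉ {0, -Q(a), -Q(b), -(Q(a)+Q(b))/2}. -/
open Polynomial

open intervalIntegral in
theorem exists_good_c (Q : Polynomial ℂ) (a b : ℂ) (m n : ℕ)
    (hab : a ≠ b) (hm : 1 ≤ m) (hn : 1 ≤ n)
    (hdeg : Q.natDegree = m + n + 1)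
    (hder : Polynomial.derivative Q = (X - C b) ^ m * (X - C a) ^ n) :
    Q.eval a ≠ Q.eval b ∧
    ∃ c : ℂ, c ∉ ({0, -Q.eval a, -Q.eval b, -(Q.eval a + Q.eval b) / 2} : Set ℂ) := by
  constructor
  · -- main part
    have key : ∀ t : ℝ, HasDerivAt (fun s : ℝ => Q.eval (b + (s : ℂ) * (a - b)))
        ((a - b) ^ (m + n + 1) * ((t : ℂ) ^ m * ((t : ℂ) - 1) ^ n)) t := by
      intro t
      have hinner : HasDerivAt (fun z : ℂ => b + z * (a - b)) (a - b)
          ((t : ℝ) : ℂ) := by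
        simpa using ((hasDerivAt_id ((t : ℝ) : ℂ)).mul_const (a - b)).const_add b
      have h1 : HasDerivAt (fun z : ℂ => Q.eval (b + z * (a - b)))
          ((Polynomial.derivative Q).eval (b + (t : ℂ) * (a - b)) * (a - b))
          ((t : ℝ) : ℂ) :=
        (Q.hasDerivAt _).comp _ hinner
      have h2 := h1.comp_ofReal
      convert h2 using 1
      rw [hder]
      simp only [eval_mul, eval_pow, eval_sub, eval_X, eval_C]
      have e1 : b + (t : ℂ) * (a - b) - b = (t : ℂ) * (a - b) := by ring
      have e2 : b + (t : ℂ) * (a - b) - a = ((t : ℂ) - 1) * (a - b) := by ring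
      rw [e1, e2, mul_pow, mul_pow]
      ring_nf
    have hcont : Continuous fun t : ℝ =>
        (a - b) ^ (m + n + 1) * ((t : ℂ) ^ m * ((t : ℂ) - 1) ^ n) := by
      fun_prop
    have hint : ∫ t in (0:ℝ)..1,
        (a - b) ^ (m + n + 1) * ((t : ℂ) ^ m * ((t : ℂ) - 1) ^ n)
        = Q.eval (b + (1 : ℂ) * (a - b)) - Q.eval (b + (0 : ℂ) * (a - b)) := by
      have := intervalIntegral.integral_eq_sub_of_hasDerivAt
        (f := fun s : ℝ => Q.eval (b + (s : ℂ) * (a - b)))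
        (fun t _ => key t) (hcont.intervalIntegrable 0 1)
      simpa using this
    have hval : Q.eval a - Q.eval b
        = (a - b) ^ (m + n + 1) * ((∫ t in (0:ℝ)..1, t ^ m * (t - 1) ^ n : ℝ) : ℂ) := by
      have e1 : b + (1 : ℂ) * (a - b) = a := by ring
      have e2 : b + (0 : ℂ) * (a - b) = b := by ring
      rw [e1, e2] at hint
      rw [← hint, intervalIntegral.integral_const_mul]
      congr 1
      rw [← intervalIntegral.integral_ofReal]
      congr 1
      ext t
      push_cast
      ring
    have hIpos : 0 < ∫ t in (0:ℝ)..1, t ^ m * (1 - t) ^ n := by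
      apply intervalIntegral.intervalIntegral_pos_of_pos_on
      · exact (Continuous.intervalIntegrable (by fun_prop) 0 1)
      · intro x hx
        exact mul_pos (pow_pos hx.1 m) (pow_pos (by linarith [hx.2]) n)
      · norm_num
    have hI : (∫ t in (0:ℝ)..1, t ^ m * (t - 1) ^ n) ≠ 0 := by
      have : (∫ t in (0:ℝ)..1, t ^ m * (t - 1) ^ n)
          = (-1 : ℝ) ^ n * ∫ t in (0:ℝ)..1, t ^ m * (1 - t) ^ n := by
        rw [← intervalIntegral.integral_const_mul]
        congr 1
        ext t
        rw [show t - 1 = -(1 - t) by ring, neg_pow]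
        ring
      rw [this]
      exact mul_ne_zero (pow_ne_zero _ (by norm_num)) (ne_of_gt hIpos)
    intro hQ
    have : Q.eval a - Q.eval b = 0 := sub_eq_zero.mpr hQ
    rw [hval] at this
    rcases mul_eq_zero.mp this with h | h
    · exact hab (sub_eq_zero.mp (pow_eq_zero_iff (by omega) |>.mp h))
    · exact hI (by exact_mod_cast h)
  · have hfin : ({0, -Q.eval a, -Q.eval b, -(Q.eval a + Q.eval b) / 2} : Set ℂ).Finite :=
      Set.toFinite _
    exact hfin.exists_notMem
end
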